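/- arXiv:1907.08639 — 5 statements merged into one kernel-verified Lean document; each statement's English description precedes it below -/
import Mathlib

section
/- If a graph G with no isolated vertices has two vertex-disjoint endpaths v_0, v_1, ..., v_k and u_0, u_1, ..., u_m with k, m ≥ 3, where v_k and u_m are leaves and the internal vertices and leaves have degree 2 and 1 respectively, then γ_tR(G + v_k u_m) = γ_tR(G), so G is not γ_tR-edge-critical. -/
/-- A total Roman dominating function: values in {0,1,2}, every vertex with value 0
has a neighbour with value 2, and vertices with positive value are not isolated in
the induced subgraph of positive-value vertices. -/
def TRDF {V : Type*} (G : SimpleGraph V) (f : V → ℕ) : Prop :=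
  (∀ v, f v ≤ 2) ∧
  (∀ v, f v = 0 → ∃ u, G.Adj v u ∧ f u = 2) ∧
  (∀ v, 0 < f v → ∃ u, G.Adj v u ∧ 0 < f u)

/-- The total Roman domination number. -/
noncomputable def trdn {V : Type*} [Fintype V] (G : SimpleGraph V) : ℕ :=
  sInf {w | ∃ f : V → ℕ, TRDF G f ∧ w = ∑ v, f v}

/-- The graph `G + uv`. -/
def addEdge {V : Type*} (G : SimpleGraph V) (u v : V) : SimpleGraph V :=
  G ⊔ SimpleGraph.fromEdgeSet {s(u, v)}

/-- `G` has no isolated vertices. -/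
def NoIsolated {V : Type*} (G : SimpleGraph V) : Prop := ∀ v, ∃ u, G.Adj v u

lemma TRDF_mono {V : Type*} {G H : SimpleGraph V} (h : G ≤ H) {f : V → ℕ}
    (hf : TRDF G f) : TRDF H f := by
  obtain ⟨h1, h2, h3⟩ := hf
  refine ⟨h1, fun v hv => ?_, fun v hv => ?_⟩
  · obtain ⟨u, hu, hu2⟩ := h2 v hv
    exact ⟨u, h hu, hu2⟩
  · obtain ⟨u, hu, hu2⟩ := h3 v hv
    exact ⟨u, h hu, hu2⟩

lemma TRDF_const {V : Type*} (G : SimpleGraph V) (hiso : NoIsolated G) :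
    TRDF G (fun _ => 2) := by
  refine ⟨fun _ => le_refl 2, fun v hv => by simp at hv, fun v _ => ?_⟩
  obtain ⟨u, hu⟩ := hiso v
  exact ⟨u, hu, by norm_num⟩

lemma addEdge_adj {V : Type*} (G : SimpleGraph V) {x y : V} (hxy : x ≠ y) (a b : V) :
    (addEdge G x y).Adj a b ↔ G.Adj a b ∨ (a = x ∧ b = y) ∨ (a = y ∧ b = x) := by
  simp only [addEdge, SimpleGraph.sup_adj, SimpleGraph.fromEdgeSet_adj,
    Set.mem_singleton_iff, Sym2.eq_iff]
  constructor
  · rintro (h | ⟨(⟨rfl, rfl⟩ | ⟨rfl, rfl⟩), hne⟩)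
    · exact Or.inl h
    · exact Or.inr (Or.inl ⟨rfl, rfl⟩)
    · exact Or.inr (Or.inr ⟨rfl, rfl⟩)
  · rintro (h | ⟨rfl, rfl⟩ | ⟨rfl, rfl⟩)
    · exact Or.inl h
    · exact Or.inr ⟨Or.inl ⟨rfl, rfl⟩, hxy⟩
    · exact Or.inr ⟨Or.inr ⟨rfl, rfl⟩, hxy.symm⟩

lemma deg_one_nbrs {V : Type*} [Fintype V] (G : SimpleGraph V) [DecidableRel G.Adj]
    {x y : V} (h : G.degree x = 1) (hxy : G.Adj x y) : ∀ z, G.Adj x z → z = y := by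
  intro z hz
  have h1 : (G.neighborFinset x).card ≤ 1 := le_of_eq h
  exact Finset.card_le_one.mp h1 z (by simpa using hz) y (by simpa using hxy)

lemma deg_two_nbrs {V : Type*} [Fintype V] (G : SimpleGraph V) [DecidableRel G.Adj]
    {x y z : V} (h : G.degree x = 2) (hxy : G.Adj x y) (hxz : G.Adj x z) (hyz : y ≠ z) :
    ∀ w, G.Adj x w → w = y ∨ w = z := by
  classical
  intro w hw
  have hsub : ({y, z} : Finset V) ⊆ G.neighborFinset x := by
    intro t ht
    simp only [Finset.mem_insert, Finset.mem_singleton] at ht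
    rcases ht with rfl | rfl <;> simpa [*]
  have hcard : (G.neighborFinset x).card ≤ ({y, z} : Finset V).card := by
    rw [Finset.card_insert_of_notMem (by simpa using hyz), Finset.card_singleton]
    exact le_of_eq h
  have heq := Finset.eq_of_subset_of_card_le hsub hcard
  have : w ∈ ({y, z} : Finset V) := by rw [heq]; simpa using hw
  simpa using this

lemma keyArith (a b c t a' b' c' t' : ℕ)
    (ha : a ≤ 2) (hb : b ≤ 2) (hc : c ≤ 2) (ha' : a' ≤ 2) (hb' : b' ≤ 2) (hc' : c' ≤ 2)
    (h0a : c = 0 → b = 2 ∨ c' = 2) (h0b : 0 < c → 0 < b ∨ 0 < c')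
    (h1a : b = 0 → a = 2 ∨ c = 2) (h1b : 0 < b → 0 < a ∨ 0 < c)
    (h2a : a = 0 → t = 2 ∨ b = 2) (h2b : 0 < a → 0 < t ∨ 0 < b)
    (k0a : c' = 0 → b' = 2 ∨ c = 2) (k0b : 0 < c' → 0 < b' ∨ 0 < c)
    (k1a : b' = 0 → a' = 2 ∨ c' = 2) (k1b : 0 < b' → 0 < a' ∨ 0 < c')
    (k2a : a' = 0 → t' = 2 ∨ b' = 2) (k2b : 0 < a' → 0 < t' ∨ 0 < b') :
    ∃ A B C A' B' C' : ℕ,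
      A ≤ 2 ∧ B ≤ 2 ∧ C ≤ 2 ∧ A' ≤ 2 ∧ B' ≤ 2 ∧ C' ≤ 2 ∧
      A + B + C + (A' + B' + C') ≤ a + b + c + (a' + b' + c') ∧
      (C = 0 → B = 2) ∧ (0 < C → 0 < B) ∧
      (B = 0 → A = 2 ∨ C = 2) ∧ (0 < B → 0 < A ∨ 0 < C) ∧
      (A = 0 → t = 2 ∨ B = 2) ∧ (0 < A → 0 < t ∨ 0 < B) ∧
      (t = 0 → a = 2 → A = 2) ∧ (0 < t → 0 < a → 0 < A) ∧
      (C' = 0 → B' = 2) ∧ (0 < C' → 0 < B') ∧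
      (B' = 0 → A' = 2 ∨ C' = 2) ∧ (0 < B' → 0 < A' ∨ 0 < C') ∧
      (A' = 0 → t' = 2 ∨ B' = 2) ∧ (0 < A' → 0 < t' ∨ 0 < B') ∧
      (t' = 0 → a' = 2 → A' = 2) ∧ (0 < t' → 0 < a' → 0 < A') := by
  by_cases hP : (c = 0 ∧ b ≠ 2) ∨ (0 < c ∧ b = 0)
  · by_cases hc0 : c = 0
    · -- P0 type failure: the q-side donates, c' = 2 becomes 1
      have hb2 : b ≠ 2 := by
        rcases hP with ⟨_, h⟩ | ⟨h, _⟩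
        · exact h
        · omega
      have hc2' : c' = 2 := (h0a hc0).resolve_left hb2
      have hbp : 0 < b' := (k0b (by omega)).resolve_right (by omega)
      by_cases hbb : b = 0
      · have ha2 : a = 2 := (h1a hbb).resolve_right (by omega)
        have ht : 0 < t := (h2b (by omega)).resolve_right (by omega)
        clear h0a h0b h1a h1b h2a h2b k0a k0b k1a k1b hP
        exact ⟨1, 2, 0, a', b', 1, by and_intros <;> omega⟩
      · have ht2 : a = 0 → t = 2 := fun h => (h2a h).resolve_right (by omega)
        clear h0a h0b h1a h1b h2a h2b k0a k0b k1a k1b hP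
        exact ⟨a, 1, 1, a', b', 1, by and_intros <;> omega⟩
    · -- P+ type failure: 0 < c, b = 0
      have hcpos : 0 < c := by omega
      have hb0 : b = 0 := by
        rcases hP with ⟨h, _⟩ | ⟨_, h⟩
        · exact absurd h hc0
        · exact h
      have hcp' : 0 < c' := (h0b hcpos).resolve_left (by omega)
      by_cases hQ : (c' = 0 ∧ b' ≠ 2) ∨ (0 < c' ∧ b' = 0)
      · have hb0' : b' = 0 := by
          rcases hQ with ⟨h, _⟩ | ⟨_, h⟩
          · omega
          · exact h
        clear hP hQ h0a h0b k0a k0b h1b k1b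
        by_cases hc2 : c = 2 <;> by_cases hc2' : c' = 2
        · have ht2 : a = 0 → t = 2 := fun h => (h2a h).resolve_right (by omega)
          have ht2' : a' = 0 → t' = 2 := fun h => (k2a h).resolve_right (by omega)
          clear h1a h2a h2b k1a k2a k2b
          exact ⟨a, 1, 1, a', 1, 1, by and_intros <;> omega⟩
        · have ht2 : a = 0 → t = 2 := fun h => (h2a h).resolve_right (by omega)
          have ha2' : a' = 2 := (k1a hb0').resolve_right hc2'
          have ht' : 0 < t' := (k2b (by omega)).resolve_right (by omega)
          clear h1a h2a h2b k1a k2a k2b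
          exact ⟨a, 1, 1, 1, 2, 0, by and_intros <;> omega⟩
        · have ha2 : a = 2 := (h1a hb0).resolve_right hc2
          have ht : 0 < t := (h2b (by omega)).resolve_right (by omega)
          have ht2' : a' = 0 → t' = 2 := fun h => (k2a h).resolve_right (by omega)
          clear h1a h2a h2b k1a k2a k2b
          exact ⟨1, 2, 0, a', 1, 1, by and_intros <;> omega⟩
        · have ha2 : a = 2 := (h1a hb0).resolve_right hc2
          have ht : 0 < t := (h2b (by omega)).resolve_right (by omega)
          have ha2' : a' = 2 := (k1a hb0').resolve_right hc2'
          have ht' : 0 < t' := (k2b (by omega)).resolve_right (by omega)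
          clear h1a h2a h2b k1a k2a k2b
          exact ⟨1, 2, 0, 1, 2, 0, by and_intros <;> omega⟩
      · -- q-side fine, unchanged
        have q1 : c' = 0 → b' = 2 := by
          intro h; by_contra h'; exact hQ (Or.inl ⟨h, h'⟩)
        have q2 : 0 < c' → 0 < b' := by
          intro h; by_contra h'; exact hQ (Or.inr ⟨h, by omega⟩)
        clear hP hQ h0a h0b k0a k0b h1b
        by_cases hc2 : c = 2
        · have ht2 : a = 0 → t = 2 := fun h => (h2a h).resolve_right (by omega)
          clear h1a h2a h2b
          exact ⟨a, 1, 1, a', b', c', by and_intros <;> omega⟩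
        · have ha2 : a = 2 := (h1a hb0).resolve_right hc2
          have ht : 0 < t := (h2b (by omega)).resolve_right (by omega)
          clear h1a h2a h2b
          exact ⟨1, 2, 0, a', b', c', by and_intros <;> omega⟩
  · have p1 : c = 0 → b = 2 := by
      intro h; by_contra h'; exact hP (Or.inl ⟨h, h'⟩)
    have p2 : 0 < c → 0 < b := by
      intro h; by_contra h'; exact hP (Or.inr ⟨h, by omega⟩)
    by_cases hQ : (c' = 0 ∧ b' ≠ 2) ∨ (0 < c' ∧ b' = 0)
    · by_cases hc0' : c' = 0
      · have hb2' : b' ≠ 2 := by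
          rcases hQ with ⟨_, h⟩ | ⟨h, _⟩
          · exact h
          · omega
        have hc2 : c = 2 := (k0a hc0').resolve_left hb2'
        have hbpos : 0 < b := by
          have := h0b (by omega)
          omega
        by_cases hbb' : b' = 0
        · have ha2' : a' = 2 := (k1a hbb').resolve_right (by omega)
          have ht' : 0 < t' := (k2b (by omega)).resolve_right (by omega)
          clear hP hQ p1 p2 h0a h0b h1a h1b k0a k0b k1a k1b k2a k2b
          exact ⟨a, b, 1, 1, 2, 0, by and_intros <;> omega⟩
        · have ht2' : a' = 0 → t' = 2 := fun h => (k2a h).resolve_right (by omega)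
          clear hP hQ p1 p2 h0a h0b h1a h1b k0a k0b k1a k1b k2a k2b
          exact ⟨a, b, 1, a', 1, 1, by and_intros <;> omega⟩
      · have hcp' : 0 < c' := by omega
        have hb0' : b' = 0 := by
          rcases hQ with ⟨h, _⟩ | ⟨_, h⟩
          · exact absurd h hc0'
          · exact h
        clear hP hQ h0a h0b k0a k0b k1b
        by_cases hc2' : c' = 2
        · have ht2' : a' = 0 → t' = 2 := fun h => (k2a h).resolve_right (by omega)
          clear k1a k2a k2b
          exact ⟨a, b, c, a', 1, 1, by and_intros <;> omega⟩
        · have ha2' : a' = 2 := (k1a hb0').resolve_right hc2'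
          have ht' : 0 < t' := (k2b (by omega)).resolve_right (by omega)
          clear k1a k2a k2b
          exact ⟨a, b, c, 1, 2, 0, by and_intros <;> omega⟩
    · have q1 : c' = 0 → b' = 2 := by
        intro h; by_contra h'; exact hQ (Or.inl ⟨h, h'⟩)
      have q2 : 0 < c' → 0 < b' := by
        intro h; by_contra h'; exact hQ (Or.inr ⟨h, by omega⟩)
      refine ⟨a, b, c, a', b', c', ?_⟩
      and_intros
      exacts [ha, hb, hc, ha', hb', hc', le_refl _, p1, p2, h1a, h1b, h2a, h2b,
        fun _ h => h, fun _ h => h, q1, q2, k1a, k1b, k2a, k2b,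
        fun _ h => h, fun _ h => h]

theorem stmt14 {V : Type*} [Fintype V] (G : SimpleGraph V) [DecidableRel G.Adj]
    (hiso : NoIsolated G)
    (k m : ℕ) (hk : 3 ≤ k) (hm : 3 ≤ m)
    (p q : ℕ → V)
    (hpinj : ∀ i j, i ≤ k → j ≤ k → p i = p j → i = j)
    (hqinj : ∀ i j, i ≤ m → j ≤ m → q i = q j → i = j)
    (hdisj : ∀ i j, i ≤ k → j ≤ m → p i ≠ q j)
    (hpadj : ∀ i, i < k → G.Adj (p i) (p (i + 1)))
    (hqadj : ∀ i, i < m → G.Adj (q i) (q (i + 1)))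
    (hp0 : 3 ≤ G.degree (p 0)) (hq0 : 3 ≤ G.degree (q 0))
    (hpint : ∀ i, 0 < i → i < k → G.degree (p i) = 2)
    (hqint : ∀ i, 0 < i → i < m → G.degree (q i) = 2)
    (hpk : G.degree (p k) = 1) (hqm : G.degree (q m) = 1) :
    trdn (addEdge G (p k) (q m)) = trdn G := by
  classical
  -- distinctness
  have pne : ∀ i j, i ≤ k → j ≤ k → i ≠ j → p i ≠ p j :=
    fun i j hi hj hij h => hij (hpinj i j hi hj h)
  have qne : ∀ i j, i ≤ m → j ≤ m → i ≠ j → q i ≠ q j :=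
    fun i j hi hj hij h => hij (hqinj i j hi hj h)
  have dp32 : p (k-3) ≠ p (k-2) := pne _ _ (by omega) (by omega) (by omega)
  have dp31 : p (k-3) ≠ p (k-1) := pne _ _ (by omega) (by omega) (by omega)
  have dp30 : p (k-3) ≠ p k := pne _ _ (by omega) le_rfl (by omega)
  have dp21 : p (k-2) ≠ p (k-1) := pne _ _ (by omega) (by omega) (by omega)
  have dp20 : p (k-2) ≠ p k := pne _ _ (by omega) le_rfl (by omega)
  have dp10 : p (k-1) ≠ p k := pne _ _ (by omega) le_rfl (by omega)
  have dq32 : q (m-3) ≠ q (m-2) := qne _ _ (by omega) (by omega) (by omega)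
  have dq31 : q (m-3) ≠ q (m-1) := qne _ _ (by omega) (by omega) (by omega)
  have dq30 : q (m-3) ≠ q m := qne _ _ (by omega) le_rfl (by omega)
  have dq21 : q (m-2) ≠ q (m-1) := qne _ _ (by omega) (by omega) (by omega)
  have dq20 : q (m-2) ≠ q m := qne _ _ (by omega) le_rfl (by omega)
  have dq10 : q (m-1) ≠ q m := qne _ _ (by omega) le_rfl (by omega)
  have pq00 : p k ≠ q m := hdisj k m le_rfl le_rfl
  have pq01 : p k ≠ q (m-1) := hdisj k (m-1) le_rfl (by omega)
  have pq02 : p k ≠ q (m-2) := hdisj k (m-2) le_rfl (by omega)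
  have pq03 : p k ≠ q (m-3) := hdisj k (m-3) le_rfl (by omega)
  have pq10 : p (k-1) ≠ q m := hdisj (k-1) m (by omega) le_rfl
  have pq11 : p (k-1) ≠ q (m-1) := hdisj (k-1) (m-1) (by omega) (by omega)
  have pq12 : p (k-1) ≠ q (m-2) := hdisj (k-1) (m-2) (by omega) (by omega)
  have pq13 : p (k-1) ≠ q (m-3) := hdisj (k-1) (m-3) (by omega) (by omega)
  have pq20 : p (k-2) ≠ q m := hdisj (k-2) m (by omega) le_rfl
  have pq21 : p (k-2) ≠ q (m-1) := hdisj (k-2) (m-1) (by omega) (by omega)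
  have pq22 : p (k-2) ≠ q (m-2) := hdisj (k-2) (m-2) (by omega) (by omega)
  have pq23 : p (k-2) ≠ q (m-3) := hdisj (k-2) (m-3) (by omega) (by omega)
  have pq30 : p (k-3) ≠ q m := hdisj (k-3) m (by omega) le_rfl
  have pq31 : p (k-3) ≠ q (m-1) := hdisj (k-3) (m-1) (by omega) (by omega)
  have pq32 : p (k-3) ≠ q (m-2) := hdisj (k-3) (m-2) (by omega) (by omega)
  have pq33 : p (k-3) ≠ q (m-3) := hdisj (k-3) (m-3) (by omega) (by omega)
  -- adjacency along the paths
  have e01 : G.Adj (p (k-1)) (p k) := by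
    have h := hpadj (k-1) (by omega)
    have hh : k - 1 + 1 = k := by omega
    rwa [hh] at h
  have e12 : G.Adj (p (k-2)) (p (k-1)) := by
    have h := hpadj (k-2) (by omega)
    have hh : k - 2 + 1 = k - 1 := by omega
    rwa [hh] at h
  have e23 : G.Adj (p (k-3)) (p (k-2)) := by
    have h := hpadj (k-3) (by omega)
    have hh : k - 3 + 1 = k - 2 := by omega
    rwa [hh] at h
  have f01 : G.Adj (q (m-1)) (q m) := by
    have h := hqadj (m-1) (by omega)
    have hh : m - 1 + 1 = m := by omega
    rwa [hh] at h
  have f12 : G.Adj (q (m-2)) (q (m-1)) := by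
    have h := hqadj (m-2) (by omega)
    have hh : m - 2 + 1 = m - 1 := by omega
    rwa [hh] at h
  have f23 : G.Adj (q (m-3)) (q (m-2)) := by
    have h := hqadj (m-3) (by omega)
    have hh : m - 3 + 1 = m - 2 := by omega
    rwa [hh] at h
  -- neighborhoods
  have nx0 : ∀ z, G.Adj (p k) z → z = p (k-1) := deg_one_nbrs G hpk e01.symm
  have nx1 : ∀ z, G.Adj (p (k-1)) z → z = p (k-2) ∨ z = p k :=
    deg_two_nbrs G (hpint (k-1) (by omega) (by omega)) e12.symm e01 dp20
  have nx2 : ∀ z, G.Adj (p (k-2)) z → z = p (k-3) ∨ z = p (k-1) :=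
    deg_two_nbrs G (hpint (k-2) (by omega) (by omega)) e23.symm e12 dp31
  have ny0 : ∀ z, G.Adj (q m) z → z = q (m-1) := deg_one_nbrs G hqm f01.symm
  have ny1 : ∀ z, G.Adj (q (m-1)) z → z = q (m-2) ∨ z = q m :=
    deg_two_nbrs G (hqint (m-1) (by omega) (by omega)) f12.symm f01 dq20
  have ny2 : ∀ z, G.Adj (q (m-2)) z → z = q (m-3) ∨ z = q (m-1) :=
    deg_two_nbrs G (hqint (m-2) (by omega) (by omega)) f23.symm f12 dq31
  have hx0y0 : p k ≠ q m := hdisj k m le_rfl le_rfl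
  have adj_iff : ∀ a b : V, (addEdge G (p k) (q m)).Adj a b ↔
      G.Adj a b ∨ (a = p k ∧ b = q m) ∨ (a = q m ∧ b = p k) := addEdge_adj G hx0y0
  -- nonemptiness of the defining sets
  have hSG : {w | ∃ f : V → ℕ, TRDF G f ∧ w = ∑ v, f v}.Nonempty :=
    ⟨_, (fun _ => 2 : V → ℕ), TRDF_const G hiso, rfl⟩
  have hSH : {w | ∃ f : V → ℕ, TRDF (addEdge G (p k) (q m)) f ∧ w = ∑ v, f v}.Nonempty :=
    ⟨_, (fun _ => 2 : V → ℕ), TRDF_mono le_sup_left (TRDF_const G hiso), rfl⟩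
  -- easy direction
  have le1 : trdn (addEdge G (p k) (q m)) ≤ trdn G := by
    obtain ⟨f0, hf0', hs⟩ := Nat.sInf_mem hSG
    apply Nat.sInf_le
    exact ⟨f0, TRDF_mono le_sup_left hf0', hs⟩
  -- hard direction
  have le2 : trdn G ≤ trdn (addEdge G (p k) (q m)) := by
    obtain ⟨f, hfT, hfsum⟩ := Nat.sInf_mem hSH
    obtain ⟨hf2, hf0, hfpos⟩ := hfT
    -- local conditions of f, expressed on values
    have hx0a : f (p k) = 0 → f (p (k-1)) = 2 ∨ f (q m) = 2 := by
      intro h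
      obtain ⟨u, hu, hu2⟩ := hf0 _ h
      rw [adj_iff] at hu
      rcases hu with hu | ⟨_, rfl⟩ | ⟨h1, _⟩
      · exact Or.inl ((nx0 u hu) ▸ hu2)
      · exact Or.inr hu2
      · exact absurd h1 hx0y0
    have hx0b : 0 < f (p k) → 0 < f (p (k-1)) ∨ 0 < f (q m) := by
      intro h
      obtain ⟨u, hu, hu2⟩ := hfpos _ h
      rw [adj_iff] at hu
      rcases hu with hu | ⟨_, rfl⟩ | ⟨h1, _⟩
      · exact Or.inl ((nx0 u hu) ▸ hu2)
      · exact Or.inr hu2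
      · exact absurd h1 hx0y0
    have hx1a : f (p (k-1)) = 0 → f (p (k-2)) = 2 ∨ f (p k) = 2 := by
      intro h
      obtain ⟨u, hu, hu2⟩ := hf0 _ h
      rw [adj_iff] at hu
      rcases hu with hu | ⟨h1, _⟩ | ⟨h1, _⟩
      · rcases nx1 u hu with rfl | rfl
        · exact Or.inl hu2
        · exact Or.inr hu2
      · exact absurd h1 dp10
      · exact absurd h1 pq10
    have hx1b : 0 < f (p (k-1)) → 0 < f (p (k-2)) ∨ 0 < f (p k) := by
      intro h
      obtain ⟨u, hu, hu2⟩ := hfpos _ h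
      rw [adj_iff] at hu
      rcases hu with hu | ⟨h1, _⟩ | ⟨h1, _⟩
      · rcases nx1 u hu with rfl | rfl
        · exact Or.inl hu2
        · exact Or.inr hu2
      · exact absurd h1 dp10
      · exact absurd h1 pq10
    have hx2a : f (p (k-2)) = 0 → f (p (k-3)) = 2 ∨ f (p (k-1)) = 2 := by
      intro h
      obtain ⟨u, hu, hu2⟩ := hf0 _ h
      rw [adj_iff] at hu
      rcases hu with hu | ⟨h1, _⟩ | ⟨h1, _⟩
      · rcases nx2 u hu with rfl | rfl
        · exact Or.inl hu2
        · exact Or.inr hu2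
      · exact absurd h1 dp20
      · exact absurd h1 pq20
    have hx2b : 0 < f (p (k-2)) → 0 < f (p (k-3)) ∨ 0 < f (p (k-1)) := by
      intro h
      obtain ⟨u, hu, hu2⟩ := hfpos _ h
      rw [adj_iff] at hu
      rcases hu with hu | ⟨h1, _⟩ | ⟨h1, _⟩
      · rcases nx2 u hu with rfl | rfl
        · exact Or.inl hu2
        · exact Or.inr hu2
      · exact absurd h1 dp20
      · exact absurd h1 pq20
    have hy0a : f (q m) = 0 → f (q (m-1)) = 2 ∨ f (p k) = 2 := by
      intro h
      obtain ⟨u, hu, hu2⟩ := hf0 _ h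
      rw [adj_iff] at hu
      rcases hu with hu | ⟨h1, _⟩ | ⟨_, rfl⟩
      · exact Or.inl ((ny0 u hu) ▸ hu2)
      · exact absurd h1 hx0y0.symm
      · exact Or.inr hu2
    have hy0b : 0 < f (q m) → 0 < f (q (m-1)) ∨ 0 < f (p k) := by
      intro h
      obtain ⟨u, hu, hu2⟩ := hfpos _ h
      rw [adj_iff] at hu
      rcases hu with hu | ⟨h1, _⟩ | ⟨_, rfl⟩
      · exact Or.inl ((ny0 u hu) ▸ hu2)
      · exact absurd h1 hx0y0.symm
      · exact Or.inr hu2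
    have hy1a : f (q (m-1)) = 0 → f (q (m-2)) = 2 ∨ f (q m) = 2 := by
      intro h
      obtain ⟨u, hu, hu2⟩ := hf0 _ h
      rw [adj_iff] at hu
      rcases hu with hu | ⟨h1, _⟩ | ⟨h1, _⟩
      · rcases ny1 u hu with rfl | rfl
        · exact Or.inl hu2
        · exact Or.inr hu2
      · exact absurd h1 pq01.symm
      · exact absurd h1 dq10
    have hy1b : 0 < f (q (m-1)) → 0 < f (q (m-2)) ∨ 0 < f (q m) := by
      intro h
      obtain ⟨u, hu, hu2⟩ := hfpos _ h
      rw [adj_iff] at hu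
      rcases hu with hu | ⟨h1, _⟩ | ⟨h1, _⟩
      · rcases ny1 u hu with rfl | rfl
        · exact Or.inl hu2
        · exact Or.inr hu2
      · exact absurd h1 pq01.symm
      · exact absurd h1 dq10
    have hy2a : f (q (m-2)) = 0 → f (q (m-3)) = 2 ∨ f (q (m-1)) = 2 := by
      intro h
      obtain ⟨u, hu, hu2⟩ := hf0 _ h
      rw [adj_iff] at hu
      rcases hu with hu | ⟨h1, _⟩ | ⟨h1, _⟩
      · rcases ny2 u hu with rfl | rfl
        · exact Or.inl hu2
        · exact Or.inr hu2
      · exact absurd h1 pq02.symm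
      · exact absurd h1 dq20
    have hy2b : 0 < f (q (m-2)) → 0 < f (q (m-3)) ∨ 0 < f (q (m-1)) := by
      intro h
      obtain ⟨u, hu, hu2⟩ := hfpos _ h
      rw [adj_iff] at hu
      rcases hu with hu | ⟨h1, _⟩ | ⟨h1, _⟩
      · rcases ny2 u hu with rfl | rfl
        · exact Or.inl hu2
        · exact Or.inr hu2
      · exact absurd h1 pq02.symm
      · exact absurd h1 dq20
    -- obtain the repaired local values
    obtain ⟨A2, A1, A0, B2, B1, B0, bA2, bA1, bA0, bB2, bB1, bB0, hsum,
        pc0, pcp, pb0, pbp, pa0, pap, pt0, ptp,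
        qc0, qcp, qb0, qbp, qa0, qap, qt0, qtp⟩ :=
      keyArith (f (p (k-2))) (f (p (k-1))) (f (p k)) (f (p (k-3)))
        (f (q (m-2))) (f (q (m-1))) (f (q m)) (f (q (m-3)))
        (hf2 _) (hf2 _) (hf2 _) (hf2 _) (hf2 _) (hf2 _)
        hx0a hx0b hx1a hx1b hx2a hx2b hy0a hy0b hy1a hy1b hy2a hy2b
    -- the repaired function
    set g : V → ℕ := fun v =>
      if v = p (k-2) then A2 else if v = p (k-1) then A1 else if v = p k then A0
      else if v = q (m-2) then B2 else if v = q (m-1) then B1 else if v = q m then B0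
      else f v with hgdef
    have gval : ∀ v, v ≠ p (k-2) → v ≠ p (k-1) → v ≠ p k → v ≠ q (m-2) →
        v ≠ q (m-1) → v ≠ q m → g v = f v := by
      intro v h1 h2 h3 h4 h5 h6
      simp only [hgdef]
      rw [if_neg h1, if_neg h2, if_neg h3, if_neg h4, if_neg h5, if_neg h6]
    have gx2 : g (p (k-2)) = A2 := by
      simp [hgdef]
    have gx1 : g (p (k-1)) = A1 := by
      simp [hgdef, dp21.symm]
    have gx0 : g (p k) = A0 := by
      simp [hgdef, dp20.symm, dp10.symm]
    have gy2 : g (q (m-2)) = B2 := by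
      simp [hgdef, pq22.symm, pq12.symm, pq02.symm]
    have gy1 : g (q (m-1)) = B1 := by
      simp [hgdef, pq21.symm, pq11.symm, pq01.symm, dq21.symm]
    have gy0 : g (q m) = B0 := by
      simp [hgdef, pq20.symm, pq10.symm, pq00.symm, dq20.symm, dq10.symm]
    have gx3 : g (p (k-3)) = f (p (k-3)) :=
      gval _ dp32 dp31 dp30 pq32
        pq31 pq30
    have gy3 : g (q (m-3)) = f (q (m-3)) :=
      gval _ pq23.symm
        pq13.symm
        pq03.symm dq32 dq31 dq30
    -- surgery helpers: witnesses away from the window are untouched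
    have notS : ∀ v u, G.Adj v u → v ≠ p (k-3) → v ≠ p (k-2) → v ≠ p (k-1) → v ≠ p k →
        v ≠ q (m-3) → v ≠ q (m-2) → v ≠ q (m-1) → v ≠ q m → g u = f u := by
      intro v u hu n3 n2 n1 n0 w3 w2 w1 w0
      apply gval u
      · intro h
        rcases nx2 v (h ▸ hu).symm with h' | h'
        · exact n3 h'
        · exact n1 h'
      · intro h
        rcases nx1 v (h ▸ hu).symm with h' | h'
        · exact n2 h'
        · exact n0 h'
      · intro h
        exact n1 (nx0 v (h ▸ hu).symm)
      · intro h
        rcases ny2 v (h ▸ hu).symm with h' | h'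
        · exact w3 h'
        · exact w1 h'
      · intro h
        rcases ny1 v (h ▸ hu).symm with h' | h'
        · exact w2 h'
        · exact w0 h'
      · intro h
        exact w1 (ny0 v (h ▸ hu).symm)
    have notS3 : ∀ u, G.Adj (p (k-3)) u → u ≠ p (k-2) → g u = f u := by
      intro u hu hne
      apply gval u hne
      · intro h
        rcases nx1 (p (k-3)) (h ▸ hu).symm with h' | h'
        · exact dp32 h'
        · exact dp30 h'
      · intro h
        exact dp31 (nx0 (p (k-3)) (h ▸ hu).symm)
      · intro h
        rcases ny2 (p (k-3)) (h ▸ hu).symm with h' | h'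
        · exact pq33 h'
        · exact pq31 h'
      · intro h
        rcases ny1 (p (k-3)) (h ▸ hu).symm with h' | h'
        · exact pq32 h'
        · exact pq30 h'
      · intro h
        exact pq31 (ny0 (p (k-3)) (h ▸ hu).symm)
    have notS3' : ∀ u, G.Adj (q (m-3)) u → u ≠ q (m-2) → g u = f u := by
      intro u hu hne
      apply gval u
      · intro h
        rcases nx2 (q (m-3)) (h ▸ hu).symm with h' | h'
        · exact pq33.symm h'
        · exact pq13.symm h'
      · intro h
        rcases nx1 (q (m-3)) (h ▸ hu).symm with h' | h'
        · exact pq23.symm h'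
        · exact pq03.symm h'
      · intro h
        exact pq13.symm (nx0 (q (m-3)) (h ▸ hu).symm)
      · exact hne
      · intro h
        rcases ny1 (q (m-3)) (h ▸ hu).symm with h' | h'
        · exact dq32 h'
        · exact dq30 h'
      · intro h
        exact dq31 (ny0 (q (m-3)) (h ▸ hu).symm)
    -- g is a TRDF of G
    have hgT : TRDF G g := by
      refine ⟨?_, ?_, ?_⟩
      · intro v
        simp only [hgdef]
        split_ifs <;> first | assumption | exact hf2 v
      · intro v hv
        by_cases h2 : v = p (k-2)
        · subst h2
          rw [gx2] at hv
          rcases pa0 hv with h | h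
          · exact ⟨p (k-3), e23.symm, by rw [gx3]; exact h⟩
          · exact ⟨p (k-1), e12, by rw [gx1]; exact h⟩
        by_cases h1 : v = p (k-1)
        · subst h1
          rw [gx1] at hv
          rcases pb0 hv with h | h
          · exact ⟨p (k-2), e12.symm, by rw [gx2]; exact h⟩
          · exact ⟨p k, e01, by rw [gx0]; exact h⟩
        by_cases h0 : v = p k
        · subst h0
          rw [gx0] at hv
          exact ⟨p (k-1), e01.symm, by rw [gx1]; exact pc0 hv⟩
        by_cases w2 : v = q (m-2)
        · subst w2
          rw [gy2] at hv
          rcases qa0 hv with h | h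
          · exact ⟨q (m-3), f23.symm, by rw [gy3]; exact h⟩
          · exact ⟨q (m-1), f12, by rw [gy1]; exact h⟩
        by_cases w1 : v = q (m-1)
        · subst w1
          rw [gy1] at hv
          rcases qb0 hv with h | h
          · exact ⟨q (m-2), f12.symm, by rw [gy2]; exact h⟩
          · exact ⟨q m, f01, by rw [gy0]; exact h⟩
        by_cases w0 : v = q m
        · subst w0
          rw [gy0] at hv
          exact ⟨q (m-1), f01.symm, by rw [gy1]; exact qc0 hv⟩
        by_cases h3 : v = p (k-3)
        · subst h3
          rw [gx3] at hv
          obtain ⟨u, hu, hu2⟩ := hf0 _ hv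
          rw [adj_iff] at hu
          rcases hu with hu | ⟨hh, _⟩ | ⟨hh, _⟩
          · by_cases he : u = p (k-2)
            · subst he
              exact ⟨p (k-2), hu, by rw [gx2]; exact pt0 hv hu2⟩
            · exact ⟨u, hu, by rw [notS3 u hu he]; exact hu2⟩
          · exact absurd hh dp30
          · exact absurd hh pq30
        by_cases w3 : v = q (m-3)
        · subst w3
          rw [gy3] at hv
          obtain ⟨u, hu, hu2⟩ := hf0 _ hv
          rw [adj_iff] at hu
          rcases hu with hu | ⟨hh, _⟩ | ⟨hh, _⟩
          · by_cases he : u = q (m-2)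
            · subst he
              exact ⟨q (m-2), hu, by rw [gy2]; exact qt0 hv hu2⟩
            · exact ⟨u, hu, by rw [notS3' u hu he]; exact hu2⟩
          · exact absurd hh pq03.symm
          · exact absurd hh dq30
        · rw [gval v h2 h1 h0 w2 w1 w0] at hv
          obtain ⟨u, hu, hu2⟩ := hf0 v hv
          rw [adj_iff] at hu
          rcases hu with hu | ⟨hh, _⟩ | ⟨hh, _⟩
          · exact ⟨u, hu, by rw [notS v u hu h3 h2 h1 h0 w3 w2 w1 w0]; exact hu2⟩
          · exact absurd hh h0
          · exact absurd hh w0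
      · intro v hv
        by_cases h2 : v = p (k-2)
        · subst h2
          rw [gx2] at hv
          rcases pap hv with h | h
          · exact ⟨p (k-3), e23.symm, by rw [gx3]; exact h⟩
          · exact ⟨p (k-1), e12, by rw [gx1]; exact h⟩
        by_cases h1 : v = p (k-1)
        · subst h1
          rw [gx1] at hv
          rcases pbp hv with h | h
          · exact ⟨p (k-2), e12.symm, by rw [gx2]; exact h⟩
          · exact ⟨p k, e01, by rw [gx0]; exact h⟩
        by_cases h0 : v = p k
        · subst h0
          rw [gx0] at hv
          exact ⟨p (k-1), e01.symm, by rw [gx1]; exact pcp hv⟩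
        by_cases w2 : v = q (m-2)
        · subst w2
          rw [gy2] at hv
          rcases qap hv with h | h
          · exact ⟨q (m-3), f23.symm, by rw [gy3]; exact h⟩
          · exact ⟨q (m-1), f12, by rw [gy1]; exact h⟩
        by_cases w1 : v = q (m-1)
        · subst w1
          rw [gy1] at hv
          rcases qbp hv with h | h
          · exact ⟨q (m-2), f12.symm, by rw [gy2]; exact h⟩
          · exact ⟨q m, f01, by rw [gy0]; exact h⟩
        by_cases w0 : v = q m
        · subst w0
          rw [gy0] at hv
          exact ⟨q (m-1), f01.symm, by rw [gy1]; exact qcp hv⟩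
        by_cases h3 : v = p (k-3)
        · subst h3
          rw [gx3] at hv
          obtain ⟨u, hu, hu2⟩ := hfpos _ hv
          rw [adj_iff] at hu
          rcases hu with hu | ⟨hh, _⟩ | ⟨hh, _⟩
          · by_cases he : u = p (k-2)
            · subst he
              exact ⟨p (k-2), hu, by rw [gx2]; exact ptp hv hu2⟩
            · exact ⟨u, hu, by rw [notS3 u hu he]; exact hu2⟩
          · exact absurd hh dp30
          · exact absurd hh pq30
        by_cases w3 : v = q (m-3)
        · subst w3
          rw [gy3] at hv
          obtain ⟨u, hu, hu2⟩ := hfpos _ hv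
          rw [adj_iff] at hu
          rcases hu with hu | ⟨hh, _⟩ | ⟨hh, _⟩
          · by_cases he : u = q (m-2)
            · subst he
              exact ⟨q (m-2), hu, by rw [gy2]; exact qtp hv hu2⟩
            · exact ⟨u, hu, by rw [notS3' u hu he]; exact hu2⟩
          · exact absurd hh pq03.symm
          · exact absurd hh dq30
        · rw [gval v h2 h1 h0 w2 w1 w0] at hv
          obtain ⟨u, hu, hu2⟩ := hfpos v hv
          rw [adj_iff] at hu
          rcases hu with hu | ⟨hh, _⟩ | ⟨hh, _⟩
          · exact ⟨u, hu, by rw [notS v u hu h3 h2 h1 h0 w3 w2 w1 w0]; exact hu2⟩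
          · exact absurd hh h0
          · exact absurd hh w0
    -- the sum does not increase
    have hgsum : ∑ v, g v ≤ ∑ v, f v := by
      set s : Finset V := {p (k-2), p (k-1), p k, q (m-2), q (m-1), q m} with hsdef
      have m1 : p (k-2) ∉ ({p (k-1), p k, q (m-2), q (m-1), q m} : Finset V) := by
        simp [dp21, dp20, pq22,
          pq21, pq20]
      have m2 : p (k-1) ∉ ({p k, q (m-2), q (m-1), q m} : Finset V) := by
        simp [dp10, pq12,
          pq11, pq10]
      have m3 : p k ∉ ({q (m-2), q (m-1), q m} : Finset V) := by
        simp [pq02, pq01, hx0y0]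
      have m4 : q (m-2) ∉ ({q (m-1), q m} : Finset V) := by simp [dq21, dq20]
      have m5 : q (m-1) ∉ ({q m} : Finset V) := by simp [dq10]
      have sum6 : ∀ h : V → ℕ, ∑ v ∈ s, h v =
          h (p (k-2)) + (h (p (k-1)) + (h (p k) + (h (q (m-2)) + (h (q (m-1)) + h (q m))))) := by
        intro h
        rw [hsdef, Finset.sum_insert m1, Finset.sum_insert m2, Finset.sum_insert m3,
          Finset.sum_insert m4, Finset.sum_insert m5, Finset.sum_singleton]
      have hcompl : ∑ v ∈ sᶜ, g v = ∑ v ∈ sᶜ, f v := by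
        refine Finset.sum_congr rfl fun v hv => ?_
        rw [hsdef] at hv
        simp only [Finset.mem_compl, Finset.mem_insert, Finset.mem_singleton] at hv
        push_neg at hv
        exact gval v hv.1 hv.2.1 hv.2.2.1 hv.2.2.2.1 hv.2.2.2.2.1 hv.2.2.2.2.2
      calc ∑ v, g v = (∑ v ∈ s, g v) + ∑ v ∈ sᶜ, g v := (Finset.sum_add_sum_compl s g).symm
        _ ≤ (∑ v ∈ s, f v) + ∑ v ∈ sᶜ, f v := by
            rw [sum6 g, sum6 f, hcompl, gx2, gx1, gx0, gy2, gy1, gy0]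
            have h' := hsum
            clear_value g s
            clear hfsum hSG hSH le1 hf0 hfpos
            omega
        _ = ∑ v, f v := Finset.sum_add_sum_compl s f
    have h1 : trdn G ≤ ∑ v, g v := by
      apply Nat.sInf_le
      exact ⟨g, hgT, rfl⟩
    exact h1.trans (hgsum.trans (le_of_eq hfsum.symm))
  exact le_antisymm le1 le2
end

section
/- Let S be a spider of order n with k ≥ 3 legs and y legs of length 2. Then γ_tR(S) = n if y ≥ k-1; γ_tR(S) = n - k + y + 1 if 1 ≤ y < k-1; and γ_tR(S) = n - k + 2 if y = 0. -/
/-- The spider Sp(l 0, ..., l (k-1)): head `none`; vertex `some ⟨i, j⟩` is the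
vertex at distance `j + 1` from the head on leg `i` (which has length `l i`). -/
def spider (k : ℕ) (l : Fin k → ℕ) : SimpleGraph (Option (Σ i : Fin k, Fin (l i))) where
  Adj a b :=
    match a, b with
    | none, none => False
    | none, some ⟨_, j⟩ => (j : ℕ) = 0
    | some ⟨_, j⟩, none => (j : ℕ) = 0
    | some ⟨i, j⟩, some ⟨i', j'⟩ =>
        (i : ℕ) = (i' : ℕ) ∧ ((j : ℕ) + 1 = (j' : ℕ) ∨ (j' : ℕ) + 1 = (j : ℕ))
  symm := by
    constructor
    rintro (_ | ⟨i, j⟩) (_ | ⟨i', j'⟩) h <;> simp_all <;> omega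
  loopless := by
    constructor
    rintro (_ | ⟨i, j⟩) h <;> simp_all

/-!
For weights in `{0, 1, 2}` we have `f v + [f v = 0] = 1 + [f v = 2]`, so `∑ f = n - #zeros + #twos`.
Every vertex of the spider other than the head has degree at most two; if it carries `2` it also
has a positive neighbour, hence at most one neighbour carrying `0`. Double counting zeros against
the twos off the head gives `#zeros ≤ #twos`, i.e. weight `≥ n`, unless the head carries `2`; then
only the zero neighbours of the head escape the count, and the head itself adds one. These lie on
distinct legs, avoiding the legs of length two (whose last vertex is a leaf, forcing its support to
be positive) and the leg of the head's positive neighbour, so there are at most `k - max y 1` of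
them. The bounds are attained by the constant weight `1` and by weight `2` on the head, `0` on the
first vertex of every leg outside a set `A` of legs containing all legs of length two, and `1`
elsewhere.
-/

open Finset

namespace TRDF

variable {V : Type*} {G : SimpleGraph V} {f : V → ℕ}

lemma pos_of_forall_adj_eq (hf : TRDF G f) {u v : V} (hv : ∀ w, G.Adj v w → w = u) :
    0 < f u := by
  rcases Nat.eq_zero_or_pos (f v) with h0 | hpos
  · obtain ⟨w, hvw, hw⟩ := hf.2.1 v h0
    rw [← hv w hvw, hw]
    exact two_pos
  · obtain ⟨w, hvw, hw⟩ := hf.2.2 v hpos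
    rwa [← hv w hvw]

variable [Fintype V]

lemma sum_add_card_zero_eq_card_add_card_two (hf : TRDF G f) :
    ∑ v, f v + #{v | f v = 0} = Fintype.card V + #{v | f v = 2} := by
  simp only [card_filter, Fintype.card_eq_sum_ones, ← sum_add_distrib]
  refine sum_congr rfl fun v _ => ?_
  have := hf.1 v
  split_ifs <;> omega

variable [DecidableEq V] [DecidableRel G.Adj]

lemma card_zero_adj_two_le (hf : TRDF G f) {h : V} (hdeg : ∀ u ≠ h, G.degree u ≤ 2) :
    #{v | f v = 0 ∧ ∃ u, u ≠ h ∧ G.Adj v u ∧ f u = 2} ≤ #{u | u ≠ h ∧ f u = 2} := by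
  refine card_le_card_of_forall_subsingleton G.Adj (fun v hv => ?_) (fun u hu => ?_)
  · obtain ⟨-, u, huh, hvu, hu⟩ := (mem_filter.1 hv).2
    exact ⟨u, mem_filter.2 ⟨mem_univ u, huh, hu⟩, hvu⟩
  · obtain ⟨huh, hu⟩ := (mem_filter.1 hu).2
    obtain ⟨w, huw, hw⟩ := hf.2.2 u (by omega)
    rintro a ⟨ha, hau⟩ b ⟨hb, hbu⟩
    simp only [mem_filter] at ha hb
    by_contra hab
    have hcard : #{a, b, w} = 3 := card_eq_three.2 ⟨a, b, w, hab, by grind, by grind, rfl⟩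
    have hsub : {a, b, w} ⊆ G.neighborFinset u := by
      intro x hx
      simp only [mem_insert, mem_singleton] at hx
      rcases hx with rfl | rfl | rfl <;> simp [hau.symm, hbu.symm, huw]
    have := card_le_card hsub
    rw [G.card_neighborFinset_eq_degree] at this
    have := hdeg u huh
    omega

lemma card_le_sum_of_degree_le_two (hf : TRDF G f) {h : V} (hdeg : ∀ u ≠ h, G.degree u ≤ 2)
    (hh : f h ≠ 2) : Fintype.card V ≤ ∑ v, f v := by
  have hzero : #{v | f v = 0} ≤ #{v | f v = 0 ∧ ∃ u, u ≠ h ∧ G.Adj v u ∧ f u = 2} := by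
    refine card_le_card fun v hv => ?_
    have hv0 := (mem_filter.1 hv).2
    obtain ⟨u, hvu, hu⟩ := hf.2.1 v hv0
    exact mem_filter.2 ⟨mem_univ v, hv0, u, by grind, hvu, hu⟩
  have htwo : #{u | u ≠ h ∧ f u = 2} ≤ #{v | f v = 2} :=
    card_le_card (monotone_filter_right _ fun _ _ => And.right)
  have := hf.card_zero_adj_two_le hdeg
  have := hf.sum_add_card_zero_eq_card_add_card_two
  omega

lemma card_lt_sum_add_card_of_degree_le_two (hf : TRDF G f) {h : V}
    (hdeg : ∀ u ≠ h, G.degree u ≤ 2) (hh : f h = 2) :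
    Fintype.card V < ∑ v, f v + #{v | G.Adj h v ∧ f v = 0} := by
  have hzero : #{v | f v = 0} ≤
      #{v | f v = 0 ∧ ∃ u, u ≠ h ∧ G.Adj v u ∧ f u = 2} + #{v | G.Adj h v ∧ f v = 0} := by
    refine (card_le_card fun v hv => ?_).trans (card_union_le _ _)
    have hv0 := (mem_filter.1 hv).2
    obtain ⟨u, hvu, hu⟩ := hf.2.1 v hv0
    rcases eq_or_ne u h with rfl | huh
    · exact mem_union_right _ (mem_filter.2 ⟨mem_univ v, hvu.symm, hv0⟩)
    · exact mem_union_left _ (mem_filter.2 ⟨mem_univ v, hv0, u, huh, hvu, hu⟩)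
  have htwo : #{u | u ≠ h ∧ f u = 2} + 1 = #{v | f v = 2} := by
    rw [← card_insert_of_notMem (a := h) (by simp)]
    congr 1
    ext v
    by_cases hv : v = h <;> simp [hv, hh]
  have := hf.card_zero_adj_two_le hdeg
  have := hf.sum_add_card_zero_eq_card_add_card_two
  omega

end TRDF

section Spider

variable {k : ℕ} {l : Fin k → ℕ}

@[simp]
lemma spider_adj_none_some {i : Fin k} {j : Fin (l i)} :
    (spider k l).Adj none (some ⟨i, j⟩) ↔ (j : ℕ) = 0 := Iff.rfl

@[simp]
lemma spider_adj_some_none {i : Fin k} {j : Fin (l i)} :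
    (spider k l).Adj (some ⟨i, j⟩) none ↔ (j : ℕ) = 0 := Iff.rfl

@[simp]
lemma spider_adj_some_some {i i' : Fin k} {j : Fin (l i)} {j' : Fin (l i')} :
    (spider k l).Adj (some ⟨i, j⟩) (some ⟨i', j'⟩) ↔
      i = i' ∧ ((j : ℕ) + 1 = j' ∨ (j' : ℕ) + 1 = j) :=
  and_congr_left' Fin.val_inj

lemma spider_adj_none_iff {v : Option (Σ i : Fin k, Fin (l i))} :
    (spider k l).Adj none v ↔ ∃ i h, v = some ⟨i, ⟨0, h⟩⟩ := by
  rcases v with _ | ⟨i, j, hj⟩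
  · simp
  · constructor
    · rintro (rfl : j = 0)
      exact ⟨i, hj, rfl⟩
    · rintro ⟨i', h, hv⟩
      simp only [Option.some.injEq, Sigma.mk.inj_iff] at hv
      obtain ⟨rfl, hj⟩ := hv
      simp [eq_of_heq hj]

lemma card_spider : Fintype.card (Option (Σ i : Fin k, Fin (l i))) = 1 + ∑ i, l i := by
  simp [add_comm]

lemma spider_noIsolated (hk : 0 < k) (hl : ∀ i, 0 < l i) : NoIsolated (spider k l) := by
  rintro (_ | ⟨i, j⟩)
  · exact ⟨some ⟨⟨0, hk⟩, ⟨0, hl _⟩⟩, rfl⟩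
  · rcases Nat.eq_zero_or_pos (j : ℕ) with hj | hj
    · exact ⟨none, hj⟩
    · exact ⟨some ⟨i, ⟨j - 1, by omega⟩⟩, by simp; omega⟩

lemma spider_degree_le_two [DecidableRel (spider k l).Adj] {u : Option (Σ i : Fin k, Fin (l i))}
    (hu : u ≠ none) : (spider k l).degree u ≤ 2 := by
  obtain ⟨⟨i, j⟩, rfl⟩ := Option.ne_none_iff_exists'.1 hu
  let dist : Option (Σ i : Fin k, Fin (l i)) → ℕ := fun v => v.elim 0 fun y => y.2 + 1
  rw [← SimpleGraph.card_neighborFinset_eq_degree]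
  refine (card_le_card_of_injOn dist (t := ({(j : ℕ), (j : ℕ) + 2} : Finset ℕ)) ?_ ?_).trans
    card_le_two
  · rintro (_ | ⟨i', j'⟩) h <;> simp [dist] at h ⊢ <;> omega
  · rintro (_ | ⟨i₁, j₁⟩) h₁ (_ | ⟨i₂, j₂⟩) h₂ heq <;> simp [dist] at h₁ h₂ heq ⊢
    obtain rfl := h₁.1
    obtain rfl := h₂.1
    exact ⟨rfl, heq_of_eq (Fin.ext heq)⟩

end Spider

section Pattern

variable {k : ℕ} {l : Fin k → ℕ}

def spiderPattern (A : Finset (Fin k)) : Option (Σ i : Fin k, Fin (l i)) → ℕ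
  | none => 2
  | some ⟨i, j⟩ => if i ∉ A ∧ (j : ℕ) = 0 then 0 else 1

lemma trdf_spiderPattern (hl : ∀ i, 0 < l i) {A : Finset (Fin k)} (hA : A.Nonempty)
    (hA₂ : ∀ i ∉ A, l i ≠ 2) : TRDF (spider k l) (spiderPattern A) := by
  refine ⟨?_, ?_, ?_⟩
  · rintro (_ | ⟨i, j⟩)
    · exact le_rfl
    · simp only [spiderPattern]
      split_ifs <;> omega
  · rintro (_ | ⟨i, j⟩) h
    · simp [spiderPattern] at h
    · simp only [spiderPattern, ite_eq_left_iff, one_ne_zero, imp_false, not_not] at h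
      exact ⟨none, h.2, rfl⟩
  · rintro (_ | ⟨i, j⟩) -
    · obtain ⟨i, hi⟩ := hA
      exact ⟨some ⟨i, ⟨0, hl i⟩⟩, rfl, by simp [spiderPattern, hi]⟩
    · rcases Nat.eq_zero_or_pos (j : ℕ) with hj | hj
      · exact ⟨none, hj, two_pos⟩
      have := j.isLt
      by_cases hprev : i ∉ A ∧ (j : ℕ) = 1
      · obtain ⟨hiA, hj₁⟩ := hprev
        have := hA₂ i hiA
        exact ⟨some ⟨i, ⟨2, by omega⟩⟩, by simp; omega, by simp [spiderPattern]⟩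
      · exact ⟨some ⟨i, ⟨j - 1, by omega⟩⟩, by simp; omega, by grind [spiderPattern]⟩

lemma sum_spiderPattern_leg (A : Finset (Fin k)) {i : Fin k} (hi : 0 < l i) :
    ∑ j : Fin (l i), spiderPattern A (some ⟨i, j⟩) + 1 = l i + if i ∈ A then 1 else 0 := by
  obtain ⟨m, hm⟩ := Nat.exists_eq_add_of_lt hi
  simp only [spiderPattern]
  rw [Fin.sum_univ_eq_sum_range (fun j => if i ∉ A ∧ j = 0 then 0 else 1), hm,
    Finset.sum_range_succ']
  by_cases hiA : i ∈ A <;> simp [hiA]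

lemma sum_spiderPattern (hl : ∀ i, 0 < l i) (A : Finset (Fin k)) :
    ∑ v, spiderPattern (l := l) A v + k = 2 + ∑ i, l i + #A := by
  rw [Fintype.sum_option, ← Finset.univ_sigma_univ, Finset.sum_sigma]
  have h := Finset.sum_congr (s₁ := univ) rfl fun i _ => sum_spiderPattern_leg (l := l) A (hl i)
  simp only [Finset.sum_add_distrib, Finset.sum_const, Finset.card_univ, Fintype.card_fin,
    smul_eq_mul, mul_one, Finset.sum_boole, Finset.filter_mem_eq_inter, Finset.univ_inter,
    Nat.cast_id] at h
  have hnone : spiderPattern (l := l) A none = 2 := rfl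
  omega

end Pattern

lemma NoIsolated.trdf_one {V : Type*} {G : SimpleGraph V} (hG : NoIsolated G) :
    TRDF G fun _ => 1 :=
  ⟨fun _ => one_le_two, fun _ h => absurd h one_ne_zero,
    fun v _ => (hG v).imp fun _ h => ⟨h, one_pos⟩⟩

lemma trdn_eq_of_forall_le {V : Type*} [Fintype V] {G : SimpleGraph V} {m : ℕ}
    (hex : ∃ f, TRDF G f ∧ ∑ v, f v = m) (hle : ∀ f, TRDF G f → m ≤ ∑ v, f v) :
    trdn G = m := by
  refine IsLeast.csInf_eq ⟨?_, ?_⟩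
  · obtain ⟨f, hf, rfl⟩ := hex
    exact ⟨f, hf, rfl⟩
  · rintro _ ⟨f, hf, rfl⟩
    exact hle f hf

section LowerBound

variable {k : ℕ} {l : Fin k → ℕ} {f : Option (Σ i : Fin k, Fin (l i)) → ℕ}

lemma card_adj_none_zero_add_card_le [DecidableRel (spider k l).Adj] (hl : ∀ i, 0 < l i)
    (s : Finset (Fin k)) (hs : ∀ i ∈ s, 0 < f (some ⟨i, ⟨0, hl i⟩⟩)) :
    #{v | (spider k l).Adj none v ∧ f v = 0} + #s ≤ k := by
  have hsub : #{v | (spider k l).Adj none v ∧ f v = 0} ≤ #(univ \ s) := by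
    refine (card_le_card fun v hv => ?_).trans
      (card_image_le (f := fun i => some ⟨i, ⟨0, hl i⟩⟩))
    obtain ⟨hadj, hv0⟩ := (mem_filter.1 hv).2
    obtain ⟨i, _, rfl⟩ := spider_adj_none_iff.1 hadj
    exact mem_image.2 ⟨i, mem_sdiff.2 ⟨mem_univ i, fun hi => (hs i hi).ne' hv0⟩, rfl⟩
  rw [card_univ_sdiff, Fintype.card_fin] at hsub
  have := s.card_le_univ
  rw [Fintype.card_fin] at this
  omega

namespace TRDF

lemma pos_of_spider_leg_eq_two (hf : TRDF (spider k l) f) {i : Fin k} (hi : l i = 2) :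
    0 < f (some ⟨i, ⟨0, by omega⟩⟩) := by
  refine hf.pos_of_forall_adj_eq (v := some ⟨i, ⟨1, by omega⟩⟩) ?_
  rintro (_ | ⟨i', j'⟩) h
  · simp at h
  · obtain ⟨rfl, h⟩ := spider_adj_some_some.1 h
    have := j'.isLt
    congr
    ext
    simp at h ⊢
    omega

lemma spider_weight_ge_of_head_ne_two (hf : TRDF (spider k l) f) (hh : f none ≠ 2) :
    1 + ∑ i, l i ≤ ∑ v, f v := by
  classical
  rw [← card_spider]
  exact hf.card_le_sum_of_degree_le_two (fun _ => spider_degree_le_two) hh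

lemma spider_weight_ge_of_head_eq_two (hl : ∀ i, 0 < l i) (hf : TRDF (spider k l) f)
    (hh : f none = 2) : 2 + ∑ i, l i + max #{i | l i = 2} 1 ≤ ∑ v, f v + k := by
  classical
  have hsum := hf.card_lt_sum_add_card_of_degree_le_two (fun _ => spider_degree_le_two) hh
  rw [card_spider] at hsum
  have hlen₂ := card_adj_none_zero_add_card_le hl {i | l i = 2}
    fun i hi => hf.pos_of_spider_leg_eq_two (mem_filter.1 hi).2
  obtain ⟨w, hw, hw0⟩ := hf.2.2 none (by omega)
  obtain ⟨i, _, rfl⟩ := spider_adj_none_iff.1 hw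
  have hleg := card_adj_none_zero_add_card_le hl {i} (by simpa using hw0)
  rw [card_singleton] at hleg
  omega

end TRDF

end LowerBound

theorem stmt15 (k : ℕ) (hk : 3 ≤ k) (l : Fin k → ℕ) (hl : ∀ i, 1 ≤ l i)
    (y n : ℕ) (hy : y = (Finset.univ.filter (fun i => l i = 2)).card)
    (hn : n = 1 + ∑ i, l i) :
    trdn (spider k l) =
      if k - 1 ≤ y then n else if 1 ≤ y then n - k + y + 1 else n - k + 2 := by
  subst hy hn
  have hkl : k ≤ ∑ i, l i := by simpa using card_nsmul_le_sum univ l 1 fun i _ => hl i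
  apply trdn_eq_of_forall_le
  · split_ifs with hy₁ hy₂
    · exact ⟨_, (spider_noIsolated (by omega) hl).trdf_one, by simp [add_comm]⟩
    · set A : Finset (Fin k) := {i | l i = 2}
      have := sum_spiderPattern hl A
      exact ⟨_, trdf_spiderPattern hl (A := A) (card_pos.1 (by omega)) (by simp [A]), by omega⟩
    · set A : Finset (Fin k) := {⟨0, by omega⟩}
      have := sum_spiderPattern hl A
      rw [card_singleton] at this
      refine ⟨_, trdf_spiderPattern hl (A := A) (singleton_nonempty _) fun i _ hi => ?_,
        by omega⟩
      exact hy₂ (card_pos.2 ⟨i, mem_filter.2 ⟨mem_univ i, hi⟩⟩)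
  · intro f hf
    by_cases hh : f none = 2
    · have := hf.spider_weight_ge_of_head_eq_two hl hh
      split_ifs <;> omega
    · have := hf.spider_weight_ge_of_head_ne_two hh
      split_ifs <;> omega
end

section
/- If G is a graph with no isolated vertices and γ_tR(G) = k ≥ 4, then G is a spanning subgraph of a graph H with γ_tR(H) = k such that γ_tR(H+e) < k for every edge e of the nonempty complement of H. -/
/-!
Among the supergraphs `H ≥ G` on the same vertex set with `γ_tR(H) = k`, take a maximal one.
Adding an edge never increases `γ_tR` (a TRDF stays a TRDF), so by maximality every added edge
strictly decreases it. The complement of `H` is nonempty because `γ_tR(K_n) ≤ 3 < k`: put 2 on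
one vertex and 1 on another.
-/

section TotalRoman

variable {V : Type*} {G H : SimpleGraph V}

lemma TRDF.mono (hle : G ≤ H) {f : V → ℕ} (hf : TRDF G f) : TRDF H f := by
  obtain ⟨hf2, hzero, hpos⟩ := hf
  refine ⟨hf2, fun v hv => ?_, fun v hv => ?_⟩
  · obtain ⟨u, hu, hfu⟩ := hzero v hv
    exact ⟨u, hle hu, hfu⟩
  · obtain ⟨u, hu, hfu⟩ := hpos v hv
    exact ⟨u, hle hu, hfu⟩

variable [Fintype V]

lemma trdn_le_of_TRDF {f : V → ℕ} (hf : TRDF G f) : trdn G ≤ ∑ v, f v :=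
  Nat.sInf_le ⟨f, hf, rfl⟩

-- A graph without any TRDF has `trdn = sInf ∅ = 0`.
lemma exists_TRDF_of_trdn_ne_zero (h : trdn G ≠ 0) : ∃ f, TRDF G f ∧ ∑ v, f v = trdn G := by
  have hne : {w | ∃ f : V → ℕ, TRDF G f ∧ w = ∑ v, f v}.Nonempty :=
    Set.nonempty_iff_ne_empty.2 fun hempty => h (Nat.sInf_eq_zero.2 (Or.inr hempty))
  obtain ⟨f, hf, hw⟩ := Nat.sInf_mem hne
  exact ⟨f, hf, hw.symm⟩

lemma trdn_anti (hle : G ≤ H) (hG : trdn G ≠ 0) : trdn H ≤ trdn G := by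
  obtain ⟨f, hf, hsum⟩ := exists_TRDF_of_trdn_ne_zero hG
  exact hsum ▸ trdn_le_of_TRDF (hf.mono hle)

lemma exists_adj_of_trdn_ne_zero (h : trdn G ≠ 0) : ∃ u v, G.Adj u v := by
  obtain ⟨f, hf, hsum⟩ := exists_TRDF_of_trdn_ne_zero h
  obtain ⟨v, -, hv⟩ : ∃ v ∈ Finset.univ, f v ≠ 0 :=
    Finset.exists_ne_zero_of_sum_ne_zero (hsum ▸ h)
  obtain ⟨u, huv, -⟩ := hf.2.2 v (Nat.pos_of_ne_zero hv)
  exact ⟨v, u, huv⟩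

lemma trdn_top_le_three [DecidableEq V] {a b : V} (hab : a ≠ b) :
    trdn (⊤ : SimpleGraph V) ≤ 3 := by
  let f : V → ℕ := Pi.single a 2 + Pi.single b 1
  have hfa : f a = 2 := by simp [f, hab]
  have hfb : f b = 1 := by simp [f, hab.symm]
  have hf : TRDF ⊤ f := by
    refine ⟨fun v => ?_, fun v hv => ⟨a, ?_, hfa⟩, fun v _ => ?_⟩
    · by_cases hva : v = a
      · rw [hva, hfa]
      · simp only [f, Pi.add_apply, Pi.single_apply, hva, if_false]
        split_ifs <;> omega
    · rintro rfl
      exact two_ne_zero (hfa ▸ hv)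
    · by_cases hva : v = a
      · exact ⟨b, hva ▸ hab, by omega⟩
      · exact ⟨a, hva, by omega⟩
  calc trdn ⊤ ≤ ∑ v, f v := trdn_le_of_TRDF hf
    _ = 3 := by simp [f, Finset.sum_add_distrib]

end TotalRoman

lemma lt_addEdge {V : Type*} {H : SimpleGraph V} {u v : V} (huv : Hᶜ.Adj u v) :
    H < addEdge H u v := by
  obtain ⟨hne, hnadj⟩ := (SimpleGraph.compl_adj H u v).1 huv
  refine lt_of_le_of_ne le_sup_left fun heq => hnadj ?_
  rw [heq]
  exact Or.inr (by simp [hne])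

theorem stmt17_general {V : Type*} [Fintype V] (G : SimpleGraph V)
    (k : ℕ) (hk : 4 ≤ k) (hG : trdn G = k) :
    ∃ H : SimpleGraph V, G ≤ H ∧ trdn H = k ∧ (∃ u v, Hᶜ.Adj u v) ∧
      ∀ u v, Hᶜ.Adj u v → trdn (addEdge H u v) < k := by
  classical
  obtain ⟨H, hGH, hmax⟩ := Finite.exists_le_maximal (p := fun H => trdn H = k) hG
  have hHk : trdn H = k := hmax.prop
  refine ⟨H, hGH, hHk, ?_, fun u v huv => ?_⟩
  · by_contra! hcompl
    have hHtop : H = ⊤ := compl_eq_bot.1 (by ext u v; simpa using hcompl u v)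
    obtain ⟨a, b, hab⟩ := exists_adj_of_trdn_ne_zero (G := G) (by omega)
    have := trdn_top_le_three hab.ne
    rw [← hHtop] at this
    omega
  · have hlt := lt_addEdge huv
    have hle : trdn (addEdge H u v) ≤ k := hHk ▸ trdn_anti hlt.le (by omega)
    exact lt_of_le_of_ne hle fun heq => hmax.not_gt heq hlt

theorem stmt17 {V : Type*} [Fintype V] (G : SimpleGraph V) (hiso : NoIsolated G)
    (k : ℕ) (hk : 4 ≤ k) (hG : trdn G = k) :
    ∃ H : SimpleGraph V, G ≤ H ∧ trdn H = k ∧ (∃ u v, Hᶜ.Adj u v) ∧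
      ∀ u v, Hᶜ.Adj u v → trdn (addEdge H u v) < k :=
  stmt17_general G k hk hG
end

section
/- For integers m ≥ n ≥ 2, the total Roman domination number of the Cartesian product K_n □ K_m equals 2n. -/
lemma pair_le_sum {k : ℕ} (g : Fin k → ℕ) {a b : Fin k} (hab : a ≠ b) :
    g a + g b ≤ ∑ i, g i := by
  have h := Finset.sum_le_sum_of_subset (Finset.subset_univ ({a, b} : Finset (Fin k)))
    (f := g)
  rwa [Finset.sum_pair hab] at h

lemma lower_bound (n m : ℕ) (h2 : 2 ≤ n) (hnm : n ≤ m) (f : Fin n × Fin m → ℕ)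
    (hf : TRDF ((⊤ : SimpleGraph (Fin n)) □ (⊤ : SimpleGraph (Fin m))) f) :
    2 * n ≤ ∑ v, f v := by
  obtain ⟨hb, h0, hpos⟩ := hf
  by_cases hrow : ∀ i, 2 ≤ ∑ j, f (i, j)
  · calc 2 * n = ∑ _i : Fin n, 2 := by simp [mul_comm]
      _ ≤ ∑ i, ∑ j, f (i, j) := Finset.sum_le_sum (fun i _ => hrow i)
      _ = ∑ v, f v := (Fintype.sum_prod_type _).symm
  · push_neg at hrow
    obtain ⟨i0, hi0⟩ := hrow
    have hi0' : ∑ j, f (i0, j) ≤ 1 := by omega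
    have hrs : ∀ j, f (i0, j) ≤ ∑ j', f (i0, j') := fun j =>
      Finset.single_le_sum (f := fun j' => f (i0, j')) (fun _ _ => Nat.zero_le _)
        (Finset.mem_univ j)
    have hcol : ∀ j : Fin m, 2 ≤ ∑ i, f (i, j) := by
      intro j
      by_cases hz : f (i0, j) = 0
      · obtain ⟨u, hadj, hu2⟩ := h0 (i0, j) hz
        rcases SimpleGraph.boxProd_adj.mp hadj with ⟨ha, hc⟩ | ⟨ha, hc⟩ <;> simp only at ha hc
        · -- same column: i0 ≠ u.1, j = u.2
          have hu : f (u.1, j) = 2 := by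
            rw [hc]; exact hu2
          have := Finset.single_le_sum (f := fun i => f (i, j)) (fun _ _ => Nat.zero_le _)
            (Finset.mem_univ u.1)
          omega
        · -- same row: contradiction
          exfalso
          have : f (i0, u.2) ≤ 1 := le_trans (hrs u.2) hi0'
          rw [hc] at this
          simp only [Prod.mk.eta] at this
          omega
      · -- f (i0, j) ≥ 1
        obtain ⟨u, hadj, hu⟩ := hpos (i0, j) (Nat.pos_of_ne_zero hz)
        rcases SimpleGraph.boxProd_adj.mp hadj with ⟨ha, hc⟩ | ⟨ha, hc⟩ <;> simp only at ha hc
        · -- same column: i0 ≠ u.1, j = u.2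
          have hu' : 0 < f (u.1, j) := by rw [hc]; exact hu
          have := pair_le_sum (fun i => f (i, j)) ((SimpleGraph.top_adj _ _).mp ha)
          omega
        · -- same row: contradiction
          exfalso
          have hu' : 0 < f (i0, u.2) := by
            rw [hc]; simpa using hu
          have hne : j ≠ u.2 := (SimpleGraph.top_adj _ _).mp ha
          have := pair_le_sum (fun j' => f (i0, j')) hne
          omega
    calc 2 * n ≤ 2 * m := by omega
      _ = ∑ _j : Fin m, 2 := by simp [mul_comm]
      _ ≤ ∑ j, ∑ i, f (i, j) := Finset.sum_le_sum (fun j _ => hcol j)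
      _ = ∑ i, ∑ j, f (i, j) := Finset.sum_comm ..
      _ = ∑ v, f v := (Fintype.sum_prod_type _).symm

open SimpleGraph in
theorem stmt18 (n m : ℕ) (h2 : 2 ≤ n) (hnm : n ≤ m) :
    trdn ((⊤ : SimpleGraph (Fin n)) □ (⊤ : SimpleGraph (Fin m))) = 2 * n := by
  have hm : 2 ≤ m := le_trans h2 hnm
  have hn0 : 0 < n := by omega
  have hm0 : 0 < m := by omega
  set j0 : Fin m := ⟨0, hm0⟩ with hj0
  have hmem : 2 * n ∈ {w | ∃ f : Fin n × Fin m → ℕ,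
      TRDF ((⊤ : SimpleGraph (Fin n)) □ (⊤ : SimpleGraph (Fin m))) f ∧ w = ∑ v, f v} := by
    refine ⟨fun p => if p.2 = j0 then 2 else 0, ⟨?_, ?_, ?_⟩, ?_⟩
    · intro v; dsimp only; split <;> omega
    · intro v hv
      have hne : v.2 ≠ j0 := by
        intro h; simp [h] at hv
      refine ⟨(v.1, j0), ?_, by simp⟩
      exact Or.inr ⟨(SimpleGraph.top_adj _ _).mpr hne, rfl⟩
    · intro v hv
      have heq : v.2 = j0 := by
        by_contra h; simp [h] at hv
      set i1 : Fin n := if v.1 = ⟨0, hn0⟩ then ⟨1, h2⟩ else ⟨0, hn0⟩ with hi1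
      have hne : v.1 ≠ i1 := by
        simp only [hi1]; split <;> simp_all [Fin.ext_iff]
      refine ⟨(i1, j0), Or.inl ⟨(SimpleGraph.top_adj _ _).mpr hne, heq⟩, by simp⟩
    · rw [Fintype.sum_prod_type]
      have : ∀ i : Fin n, (∑ j : Fin m, if j = j0 then 2 else 0) = 2 := by
        intro i; rw [Finset.sum_ite_eq' Finset.univ j0 (fun _ => 2)]; simp
      simp only [this]
      simp [mul_comm]
  apply le_antisymm
  · exact Nat.sInf_le hmem
  · apply le_csInf ⟨_, hmem⟩
    rintro w ⟨f, hf, rfl⟩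
    exact lower_bound n m h2 hnm f hf
end

section
/- For n ≥ 2, the graph D_n (obtained from n copies of K_4 minus an edge, identified at a single central vertex c, where in the i-th copy c, u_i, w_i, v_i, c is a 4-cycle and u_i v_i is an edge, with w_i of degree 2) satisfies γ_tR(D_n) = 2n+1, and every minimum-weight total Roman dominating function f on D_n has f(w_i) = 0 for all 1 ≤ i ≤ n. -/
/-- The graph D_n: central vertex ; for each i, vertices
u_i = some (i, 0), v_i = some (i, 1), w_i = some (i, 2); in each copy
u_i, v_i, w_i form a triangle and c is adjacent to u_i and v_i but not w_i. -/
def Dgraph (n : ℕ) : SimpleGraph (Option (Fin n × Fin 3)) where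
  Adj a b :=
    match a, b with
    | none, none => False
    | none, some (_, j) => j ≠ 2
    | some (_, j), none => j ≠ 2
    | some (i, j), some (i', j') => i = i' ∧ j ≠ j'
  symm := by
    constructor
    rintro (_ | ⟨i, j⟩) (_ | ⟨i', j'⟩) h <;> simp_all
    exact fun e => h.2 e.symm
  loopless := by
    constructor
    rintro (_ | ⟨i, j⟩) h <;> simp_all

/-!
Checking the TRDF conditions at `u_i`, `v_i`, `w_i` shows that every copy `{u_i, v_i, w_i}`
carries weight at least `2`, and at least `3` when `f c = 0`. So the total weight is at least
`min (3n) (2n + 1)`, and `c ↦ 1, u_i ↦ 2` attains `2n + 1`. For `n ≥ 2` a minimum function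
cannot have `f c = 0`, hence `f c = 1` and every copy has weight exactly `2`; since `c` does not
carry `2`, such a copy must place its `2` on `u_i` or `v_i` and leave `w_i` at `0`.
-/

namespace Dgraph

variable {n : ℕ}

@[simp] lemma adj_none_some {i : Fin n} {j : Fin 3} :
    (Dgraph n).Adj none (some (i, j)) ↔ j ≠ 2 := Iff.rfl

@[simp] lemma adj_some_none {i : Fin n} {j : Fin 3} :
    (Dgraph n).Adj (some (i, j)) none ↔ j ≠ 2 := Iff.rfl

@[simp] lemma adj_some_some {i i' : Fin n} {j j' : Fin 3} :
    (Dgraph n).Adj (some (i, j)) (some (i', j')) ↔ i = i' ∧ j ≠ j' := Iff.rfl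

lemma exists_adj_apex_iff (i : Fin n) (P : Option (Fin n × Fin 3) → Prop) :
    (∃ x, (Dgraph n).Adj (some (i, 2)) x ∧ P x) ↔ P (some (i, 0)) ∨ P (some (i, 1)) := by
  simp [Option.exists, Prod.exists, Fin.exists_fin_succ, ← and_or_left]

lemma exists_adj_base_iff (i : Fin n) (j k : Fin 3) (hjk : j ≠ k) (hj : j ≠ 2) (hk : k ≠ 2)
    (P : Option (Fin n × Fin 3) → Prop) :
    (∃ x, (Dgraph n).Adj (some (i, j)) x ∧ P x) ↔
      P none ∨ P (some (i, k)) ∨ P (some (i, 2)) := by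
  fin_cases j <;> fin_cases k <;>
    simp_all [Option.exists, Prod.exists, Fin.exists_fin_succ, ← and_or_left]

def copyWeight (f : Option (Fin n × Fin 3) → ℕ) (i : Fin n) : ℕ :=
  f (some (i, 0)) + f (some (i, 1)) + f (some (i, 2))

lemma sum_eq_center_add_sum_copyWeight (f : Option (Fin n × Fin 3) → ℕ) :
    ∑ x, f x = f none + ∑ i, copyWeight f i := by
  simp only [Fintype.sum_option, Fintype.sum_prod_type, Fin.sum_univ_three, copyWeight]

section TRDF

variable {f : Option (Fin n × Fin 3) → ℕ}

lemma copy_constraints_of_trdf (hf : TRDF (Dgraph n) f) (i : Fin n) :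
    (f (some (i, 2)) = 0 → f (some (i, 0)) = 2 ∨ f (some (i, 1)) = 2) ∧
    (0 < f (some (i, 2)) → 0 < f (some (i, 0)) ∨ 0 < f (some (i, 1))) ∧
    (f (some (i, 0)) = 0 → f none = 2 ∨ f (some (i, 1)) = 2 ∨ f (some (i, 2)) = 2) ∧
    (f (some (i, 1)) = 0 → f none = 2 ∨ f (some (i, 0)) = 2 ∨ f (some (i, 2)) = 2) ∧
    (0 < f (some (i, 0)) → 0 < f none ∨ 0 < f (some (i, 1)) ∨ 0 < f (some (i, 2))) ∧
    (0 < f (some (i, 1)) → 0 < f none ∨ 0 < f (some (i, 0)) ∨ 0 < f (some (i, 2))) := by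
  obtain ⟨-, hzero, hpos⟩ := hf
  have hw := exists_adj_apex_iff i
  have hu := exists_adj_base_iff i 0 1 (by decide) (by decide) (by decide)
  have hv := exists_adj_base_iff i 1 0 (by decide) (by decide) (by decide)
  exact ⟨fun h => (hw _).1 (hzero _ h), fun h => (hw _).1 (hpos _ h),
    fun h => (hu _).1 (hzero _ h), fun h => (hv _).1 (hzero _ h),
    fun h => (hu _).1 (hpos _ h), fun h => (hv _).1 (hpos _ h)⟩

lemma two_le_copyWeight (hf : TRDF (Dgraph n) f) (i : Fin n) : 2 ≤ copyWeight f i := by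
  have := copy_constraints_of_trdf hf i
  unfold copyWeight
  omega

lemma three_le_copyWeight (hf : TRDF (Dgraph n) f) (hc : f none = 0) (i : Fin n) :
    3 ≤ copyWeight f i := by
  have := copy_constraints_of_trdf hf i
  unfold copyWeight
  omega

lemma apex_eq_zero_of_copyWeight_eq_two (hf : TRDF (Dgraph n) f) (hc : f none ≠ 2) (i : Fin n)
    (hi : copyWeight f i = 2) : f (some (i, 2)) = 0 := by
  have := copy_constraints_of_trdf hf i
  have := hf.1 (some (i, 0))
  have := hf.1 (some (i, 1))
  unfold copyWeight at hi
  omega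

lemma two_mul_le_sum_copyWeight (hf : TRDF (Dgraph n) f) : 2 * n ≤ ∑ i, copyWeight f i := by
  simpa [mul_comm] using Finset.sum_le_sum fun i (_ : i ∈ Finset.univ) => two_le_copyWeight hf i

lemma three_mul_le_sum_copyWeight (hf : TRDF (Dgraph n) f) (hc : f none = 0) :
    3 * n ≤ ∑ i, copyWeight f i := by
  simpa [mul_comm] using
    Finset.sum_le_sum fun i (_ : i ∈ Finset.univ) => three_le_copyWeight hf hc i

lemma two_mul_add_one_le_sum (hn : 0 < n) (hf : TRDF (Dgraph n) f) : 2 * n + 1 ≤ ∑ x, f x := by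
  rw [sum_eq_center_add_sum_copyWeight]
  rcases Nat.eq_zero_or_pos (f none) with hc | hc
  · have := three_mul_le_sum_copyWeight hf hc
    omega
  · have := two_mul_le_sum_copyWeight hf
    omega

lemma apex_eq_zero_of_sum_eq (hn : 2 ≤ n) (hf : TRDF (Dgraph n) f)
    (hsum : ∑ x, f x = 2 * n + 1) (i : Fin n) : f (some (i, 2)) = 0 := by
  rw [sum_eq_center_add_sum_copyWeight] at hsum
  have hc : f none ≠ 0 := fun hc => by
    have := three_mul_le_sum_copyWeight hf hc
    omega
  have hcopies : ∑ i, copyWeight f i = 2 * n := by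
    have := two_mul_le_sum_copyWeight hf
    omega
  have hi : copyWeight f i = 2 := by
    refine ((Finset.sum_eq_sum_iff_of_le fun j _ => two_le_copyWeight hf j).1 ?_ i
      (Finset.mem_univ i)).symm
    simp [hcopies, mul_comm]
  exact apex_eq_zero_of_copyWeight_eq_two hf (by omega) i hi

end TRDF

def minTRDF (n : ℕ) : Option (Fin n × Fin 3) → ℕ
  | none => 1
  | some (_, j) => if j = 0 then 2 else 0

lemma trdf_minTRDF (hn : 0 < n) : TRDF (Dgraph n) (minTRDF n) := by
  refine ⟨?_, ?_, ?_⟩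
  · rintro (_ | ⟨i, j⟩) <;> simp [minTRDF, apply_ite (· ≤ 2)]
  · rintro (_ | ⟨i, j⟩) h
    · simp [minTRDF] at h
    · refine ⟨some (i, 0), ⟨rfl, ?_⟩, by simp [minTRDF]⟩
      rintro rfl
      simp [minTRDF] at h
  · rintro (_ | ⟨i, j⟩) h
    · exact ⟨some (⟨0, hn⟩, 0), by simp, by simp [minTRDF]⟩
    · refine ⟨none, ?_, by simp [minTRDF]⟩
      rintro rfl
      simp [minTRDF] at h

lemma sum_minTRDF : ∑ x, minTRDF n x = 2 * n + 1 := by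
  rw [sum_eq_center_add_sum_copyWeight]
  simp [copyWeight, minTRDF, add_comm, mul_comm]

lemma trdn_eq (hn : 0 < n) : trdn (Dgraph n) = 2 * n + 1 :=
  IsLeast.csInf_eq ⟨⟨minTRDF n, trdf_minTRDF hn, sum_minTRDF.symm⟩,
    by rintro _ ⟨f, hf, rfl⟩; exact two_mul_add_one_le_sum hn hf⟩

end Dgraph

theorem stmt19 (n : ℕ) (hn : 2 ≤ n) :
    trdn (Dgraph n) = 2 * n + 1 ∧
    ∀ f : Option (Fin n × Fin 3) → ℕ, TRDF (Dgraph n) f →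
      (∑ x, f x) = trdn (Dgraph n) → ∀ i : Fin n, f (some (i, 2)) = 0 := by
  have htrdn := Dgraph.trdn_eq (by omega : 0 < n)
  exact ⟨htrdn, fun f hf hsum => Dgraph.apex_eq_zero_of_sum_eq hn hf (hsum.trans htrdn)⟩
end
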